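/- Assume d ≥ 1 and 2 + 4/d < p + 1 < 2*. Let Q_ω be the ground state of ΔQ − ωQ + |Q|^{p−1}Q = 0 for ω > 0 (so 𝒦(Q_ω) = 0 and 𝒩₂(Q_ω) = N₂). Then Q_ω lies in the closure of PW₊ and in the closure of PW₋ in the H¹-topology: for every ε > 0 there exist f₊ ∈ PW₊ and f₋ ∈ PW₋ with ‖Q_ω − f_±‖_{H¹} ≤ ε. In fact f_± = (1 ∓ ε/‖Q_ω‖_{H¹}) Q_ω work. -/

import Mathlib

open MeasureTheory Filter Set
open scoped ENNReal Topology

noncomputable section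

abbrev Euc (d : ℕ) := EuclideanSpace ℝ (Fin d)

def gradSq (d : ℕ) (f : Euc d → ℂ) : ℝ := ∫ x, ‖fderiv ℝ f x‖ ^ 2

def ppow (d : ℕ) (q : ℝ) (f : Euc d → ℂ) : ℝ := ∫ x, ‖f x‖ ^ q

def l2norm (d : ℕ) (f : Euc d → ℂ) : ℝ := Real.sqrt (ppow d 2 f)

def InH1 (d : ℕ) (f : Euc d → ℂ) : Prop :=
  MemLp f 2 (volume : Measure (Euc d)) ∧ Differentiable ℝ f ∧
    Integrable (fun x => ‖fderiv ℝ f x‖ ^ 2) (volume : Measure (Euc d))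

def Hfun (d : ℕ) (p : ℝ) (f : Euc d → ℂ) : ℝ :=
  gradSq d f - (2 / (p + 1)) * ppow d (p + 1) f

def Kfun (d : ℕ) (p : ℝ) (f : Euc d → ℂ) : ℝ :=
  gradSq d f - ((d : ℝ) * (p - 1) / (2 * (p + 1))) * ppow d (p + 1) f

def Adm (d : ℕ) (p : ℝ) (f : Euc d → ℂ) : Prop :=
  InH1 d f ∧ MemLp f (ENNReal.ofReal (p + 1)) (volume : Measure (Euc d)) ∧
    ¬ (f =ᵐ[(volume : Measure (Euc d))] (0 : Euc d → ℂ))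

def N2fun (d : ℕ) (p : ℝ) (f : Euc d → ℂ) : ℝ :=
  l2norm d f ^ (p + 1 - (d : ℝ) * (p - 1) / 2) *
    Real.sqrt (gradSq d f) ^ ((d : ℝ) * (p - 1) / 2 - 2)

def N2val (d : ℕ) (p : ℝ) : ℝ :=
  sInf {r : ℝ | ∃ f : Euc d → ℂ, Adm d p f ∧ Kfun d p f ≤ 0 ∧ r = N2fun d p f}

def Bfun (d : ℕ) (p : ℝ) (f : Euc d → ℂ) : ℝ :=
  (((d : ℝ) * (p - 1) - 4) / ((d : ℝ) * (p - 1))) *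
    (N2val d p / l2norm d f ^ (p + 1 - (d : ℝ) * (p - 1) / 2)) ^ (4 / ((d : ℝ) * (p - 1) - 4))

def PWset (d : ℕ) (p : ℝ) : Set (Euc d → ℂ) :=
  {f | Adm d p f ∧ Hfun d p f < Bfun d p f}

def PWplus (d : ℕ) (p : ℝ) : Set (Euc d → ℂ) :=
  {f | f ∈ PWset d p ∧ 0 < Kfun d p f}

def PWminus (d : ℕ) (p : ℝ) : Set (Euc d → ℂ) :=
  {f | f ∈ PWset d p ∧ Kfun d p f < 0}

/-- H¹ norm. -/
def h1norm (d : ℕ) (f : Euc d → ℂ) : ℝ := Real.sqrt (ppow d 2 f + gradSq d f)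

/-- The Laplacian `Δf(x) = ∑ᵢ ∂²f/∂xᵢ²(x)`. -/
def lap (d : ℕ) (f : Euc d → ℂ) (x : Euc d) : ℂ :=
  ∑ i : Fin d,
    fderiv ℝ (fun y => fderiv ℝ f y (EuclideanSpace.single i 1)) x (EuclideanSpace.single i 1)

/-!
Scaling `Q ↦ sQ` multiplies `‖∇Q‖²` by `s²` and `‖Q‖_{p+1}^{p+1}` by `s^{p+1}`, so `𝒦(Q) = 0`
gives `𝒦(sQ) = (s² − s^{p+1}) ‖∇Q‖²`, positive for `s < 1` and negative for `s > 1`.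
With `D = d(p−1)` and `𝒩₂(Q) = N₂`, both `ℋ(sQ)` and `ℬ(sQ)` are explicit multiples of `‖∇Q‖²`,
and `ℋ(sQ) < ℬ(sQ)` for `s ≠ 1` is the strict weighted AM–GM inequality
`s² < (4/D) s^{p+1} + (1 − 4/D) s^b` for the exponent `b` making `(4/D)(p+1) + (1 − 4/D) b = 2`.
Since `‖Q − sQ‖_{H¹} = |1 − s| ‖Q‖_{H¹}`, letting `s → 1` from either side proves the claim.
-/

theorem Real.rpow_weighted_mean_lt {s a b w : ℝ} (hs : 0 < s) (hs1 : s ≠ 1) (hab : a ≠ b)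
    (hw₀ : 0 < w) (hw₁ : w < 1) :
    s ^ (w * a + (1 - w) * b) < w * s ^ a + (1 - w) * s ^ b := by
  have hne : s ^ a ≠ s ^ b := fun h => hab ((Real.rpow_right_inj hs hs1).1 h)
  have h := (Real.geom_mean_lt_arith_mean2_weighted_iff_of_pos hw₀ (sub_pos.2 hw₁)
    (Real.rpow_nonneg hs.le a) (Real.rpow_nonneg hs.le b) (by ring)).2 hne
  rwa [← Real.rpow_mul hs.le, ← Real.rpow_mul hs.le, ← Real.rpow_add hs, mul_comm a,
    mul_comm b] at h

section Scaling

variable {d : ℕ} {p : ℝ} (f : Euc d → ℂ) (s : ℝ)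

theorem gradSq_nonneg : 0 ≤ gradSq d f :=
  integral_nonneg fun _ => by positivity

theorem l2norm_nonneg : 0 ≤ l2norm d f :=
  Real.sqrt_nonneg _

theorem N2val_nonneg : 0 ≤ N2val d p :=
  Real.sInf_nonneg <| by
    rintro r ⟨f, -, -, rfl⟩
    exact mul_nonneg (Real.rpow_nonneg (l2norm_nonneg f) _)
      (Real.rpow_nonneg (Real.sqrt_nonneg _) _)

theorem ppow_pos {q : ℝ} (hq : 0 < q) (hf : MemLp f (ENNReal.ofReal q) volume)
    (hf0 : ¬ f =ᵐ[volume] 0) : 0 < ppow d q f := by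
  have hint := hf.integrable_norm_rpow (by simpa using hq) ENNReal.ofReal_ne_top
  rw [ENNReal.toReal_ofReal hq.le] at hint
  refine (integral_nonneg fun x => by positivity).lt_of_ne' fun h => hf0 ?_
  filter_upwards [(integral_eq_zero_iff_of_nonneg (fun x => by positivity) hint).1 h] with x hx
  simpa [Real.rpow_eq_zero (norm_nonneg _) hq.ne'] using hx

theorem Adm.ppow_two_pos {f : Euc d → ℂ} (hf : Adm d p f) : 0 < ppow d 2 f :=
  ppow_pos f two_pos (by simpa using hf.1.1) hf.2.2

theorem norm_fderiv_ofReal_mul {x : Euc d} (hf : DifferentiableAt ℝ f x) :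
    ‖fderiv ℝ (fun y => (s : ℂ) * f y) x‖ = |s| * ‖fderiv ℝ f x‖ := by
  rw [fderiv_const_mul hf, norm_smul, Complex.norm_real, Real.norm_eq_abs]

theorem gradSq_ofReal_mul (hf : Differentiable ℝ f) :
    gradSq d (fun x => (s : ℂ) * f x) = s ^ 2 * gradSq d f := by
  simp only [gradSq, norm_fderiv_ofReal_mul f s (hf _), mul_pow, sq_abs, integral_const_mul]

theorem ppow_ofReal_mul (q : ℝ) :
    ppow d q (fun x => (s : ℂ) * f x) = |s| ^ q * ppow d q f := by
  simp only [ppow, norm_mul, Complex.norm_real, Real.norm_eq_abs,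
    Real.mul_rpow (abs_nonneg s) (norm_nonneg _), integral_const_mul]

theorem l2norm_ofReal_mul : l2norm d (fun x => (s : ℂ) * f x) = |s| * l2norm d f := by
  rw [l2norm, l2norm, ppow_ofReal_mul, Real.rpow_two, Real.sqrt_mul (sq_nonneg _),
    Real.sqrt_sq_eq_abs, abs_abs]

theorem h1norm_ofReal_mul (hf : Differentiable ℝ f) :
    h1norm d (fun x => (s : ℂ) * f x) = |s| * h1norm d f := by
  rw [h1norm, h1norm, ppow_ofReal_mul, gradSq_ofReal_mul f s hf, Real.rpow_two, sq_abs,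
    ← mul_add, Real.sqrt_mul (sq_nonneg _), Real.sqrt_sq_eq_abs]

theorem Adm.ofReal_mul {f : Euc d → ℂ} (hf : Adm d p f) {s : ℝ} (hs : s ≠ 0) :
    Adm d p (fun x => (s : ℂ) * f x) := by
  obtain ⟨⟨hL2, hdiff, hgrad⟩, hLp, hf0⟩ := hf
  refine ⟨⟨hL2.const_mul _, hdiff.const_mul _, ?_⟩, hLp.const_mul _, fun h => hf0 ?_⟩
  · simpa only [norm_fderiv_ofReal_mul f s (hdiff _), mul_pow, sq_abs] using
      hgrad.const_mul (s ^ 2)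
  · filter_upwards [h] with x hx
    simpa [hs] using hx

theorem Bfun_ofReal_mul {s : ℝ} (hs : 0 < s) :
    Bfun d p (fun x => (s : ℂ) * f x) =
      s ^ (-(p + 1 - (d : ℝ) * (p - 1) / 2) * (4 / ((d : ℝ) * (p - 1) - 4))) * Bfun d p f := by
  set A := p + 1 - (d : ℝ) * (p - 1) / 2
  have hquot : N2val d p / (s * l2norm d f) ^ A = s ^ (-A) * (N2val d p / l2norm d f ^ A) := by
    rw [Real.mul_rpow hs.le (l2norm_nonneg f), Real.rpow_neg hs.le]
    ring
  rw [Bfun, Bfun, l2norm_ofReal_mul, abs_of_pos hs, hquot,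
    Real.mul_rpow (Real.rpow_nonneg hs.le _)
      (div_nonneg N2val_nonneg (Real.rpow_nonneg (l2norm_nonneg f) _)),
    ← Real.rpow_mul hs.le]
  ring

end Scaling

theorem Kfun_ofReal_mul_of_Kfun_eq_zero {d : ℕ} {p : ℝ} {Q : Euc d → ℂ}
    (hQ : Differentiable ℝ Q) (hK : Kfun d p Q = 0) {s : ℝ} (hs : 0 < s) :
    Kfun d p (fun x => (s : ℂ) * Q x) = (s ^ 2 - s ^ (p + 1)) * gradSq d Q := by
  rw [Kfun, sub_eq_zero] at hK
  rw [Kfun, gradSq_ofReal_mul Q s hQ, ppow_ofReal_mul, abs_of_pos hs, hK]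
  ring

section GroundState

variable {d : ℕ} {p : ℝ} {Q : Euc d → ℂ} (hD : 4 < (d : ℝ) * (p - 1))
include hD

theorem one_lt_of_four_lt_mul : 1 < p := by
  by_contra! hp
  nlinarith [(Nat.cast_nonneg d : (0 : ℝ) ≤ d)]

theorem ppow_eq_of_Kfun_eq_zero (hK : Kfun d p Q = 0) :
    2 / (p + 1) * ppow d (p + 1) Q = 4 / ((d : ℝ) * (p - 1)) * gradSq d Q := by
  have hp := one_lt_of_four_lt_mul hD
  rw [Kfun, sub_eq_zero] at hK
  have hd : (d : ℝ) ≠ 0 := by rintro h; norm_num [h] at hD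
  have hp1 : p - 1 ≠ 0 := by linarith
  rw [hK]
  field_simp
  ring

theorem gradSq_pos_of_Kfun_eq_zero (hQ : Adm d p Q) (hK : Kfun d p Q = 0) :
    0 < gradSq d Q := by
  have hp := one_lt_of_four_lt_mul hD
  have hP : 0 < ppow d (p + 1) Q := ppow_pos Q (by linarith) hQ.2.1 hQ.2.2
  rw [Kfun, sub_eq_zero] at hK
  rw [hK]
  exact mul_pos (div_pos (by linarith) (by linarith)) hP

theorem Hfun_ofReal_mul_of_Kfun_eq_zero (hQ : Differentiable ℝ Q) (hK : Kfun d p Q = 0)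
    {s : ℝ} (hs : 0 < s) :
    Hfun d p (fun x => (s : ℂ) * Q x) =
      (s ^ 2 - 4 / ((d : ℝ) * (p - 1)) * s ^ (p + 1)) * gradSq d Q := by
  rw [Hfun, gradSq_ofReal_mul Q s hQ, ppow_ofReal_mul, abs_of_pos hs,
    mul_left_comm, ppow_eq_of_Kfun_eq_zero hD hK]
  ring

theorem Bfun_eq_of_N2fun_eq_N2val (hL : 0 < l2norm d Q) (hN2 : N2fun d p Q = N2val d p) :
    Bfun d p Q = ((d : ℝ) * (p - 1) - 4) / ((d : ℝ) * (p - 1)) * gradSq d Q := by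
  have hexp : ((d : ℝ) * (p - 1) / 2 - 2) * (4 / ((d : ℝ) * (p - 1) - 4)) = 2 := by
    field_simp [(by linarith : (d : ℝ) * (p - 1) - 4 ≠ 0)]
    ring
  rw [Bfun, ← hN2, N2fun, mul_div_cancel_left₀ _ (Real.rpow_pos_of_pos hL _).ne',
    ← Real.rpow_mul (Real.sqrt_nonneg _), hexp, Real.rpow_two, Real.sq_sqrt (gradSq_nonneg Q)]

theorem ofReal_mul_mem_PWset (hQ : Adm d p Q) (hK : Kfun d p Q = 0)
    (hN2 : N2fun d p Q = N2val d p) {s : ℝ} (hs : 0 < s) (hs1 : s ≠ 1) :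
    (fun x => (s : ℂ) * Q x) ∈ PWset d p := by
  set D := (d : ℝ) * (p - 1)
  set b := -(p + 1 - D / 2) * (4 / (D - 4)) with hb_def
  have hp := one_lt_of_four_lt_mul hD
  have hD0 : D ≠ 0 := by linarith
  -- the two exponents coincide only when `p = 1`
  have hb : p + 1 ≠ b := by
    intro h
    rw [hb_def] at h
    field_simp [(by linarith : D - 4 ≠ 0)] at h
    nlinarith
  have hmean : 4 / D * (p + 1) + (1 - 4 / D) * b = 2 := by
    rw [hb_def]
    field_simp [(by linarith : D - 4 ≠ 0)]
    ring
  have hamgm := Real.rpow_weighted_mean_lt hs hs1 hb (div_pos four_pos (by linarith))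
    ((div_lt_one (by linarith)).2 hD)
  rw [hmean, Real.rpow_two] at hamgm
  refine ⟨hQ.ofReal_mul hs.ne', ?_⟩
  rw [Hfun_ofReal_mul_of_Kfun_eq_zero hD hQ.1.2.1 hK hs, Bfun_ofReal_mul Q hs,
    Bfun_eq_of_N2fun_eq_N2val hD (Real.sqrt_pos.2 hQ.ppow_two_pos) hN2, ← one_sub_div hD0]
  calc (s ^ 2 - 4 / D * s ^ (p + 1)) * gradSq d Q < (1 - 4 / D) * s ^ b * gradSq d Q :=
        mul_lt_mul_of_pos_right (by linarith) (gradSq_pos_of_Kfun_eq_zero hD hQ hK)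
    _ = s ^ b * ((1 - 4 / D) * gradSq d Q) := by ring

theorem ofReal_mul_mem_PWplus (hQ : Adm d p Q) (hK : Kfun d p Q = 0)
    (hN2 : N2fun d p Q = N2val d p) {s : ℝ} (hs₀ : 0 < s) (hs₁ : s < 1) :
    (fun x => (s : ℂ) * Q x) ∈ PWplus d p := by
  have hp := one_lt_of_four_lt_mul hD
  refine ⟨ofReal_mul_mem_PWset hD hQ hK hN2 hs₀ hs₁.ne, ?_⟩
  rw [Kfun_ofReal_mul_of_Kfun_eq_zero hQ.1.2.1 hK hs₀, ← Real.rpow_two]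
  exact mul_pos (sub_pos.2 (Real.rpow_lt_rpow_of_exponent_gt hs₀ hs₁ (by linarith)))
    (gradSq_pos_of_Kfun_eq_zero hD hQ hK)

theorem ofReal_mul_mem_PWminus (hQ : Adm d p Q) (hK : Kfun d p Q = 0)
    (hN2 : N2fun d p Q = N2val d p) {s : ℝ} (hs : 1 < s) :
    (fun x => (s : ℂ) * Q x) ∈ PWminus d p := by
  have hp := one_lt_of_four_lt_mul hD
  refine ⟨ofReal_mul_mem_PWset hD hQ hK hN2 (by linarith) hs.ne', ?_⟩
  rw [Kfun_ofReal_mul_of_Kfun_eq_zero hQ.1.2.1 hK (by linarith), ← Real.rpow_two]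
  exact mul_neg_of_neg_of_pos (sub_neg.2 (Real.rpow_lt_rpow_of_exponent_lt hs (by linarith)))
    (gradSq_pos_of_Kfun_eq_zero hD hQ hK)

end GroundState

theorem h1norm_sub_ofReal_mul {d : ℕ} {Q : Euc d → ℂ} (hQ : Differentiable ℝ Q) (s : ℝ) :
    h1norm d (fun x => Q x - (s : ℂ) * Q x) = |1 - s| * h1norm d Q := by
  rw [← h1norm_ofReal_mul Q (1 - s) hQ]
  congr 1
  funext x
  push_cast
  ring

theorem ground_state_instability_general (d : ℕ) (p : ℝ) (hd : 1 ≤ d)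
    (hp1 : 2 + 4 / (d : ℝ) < p + 1)
    (Q : Euc d → ℂ) (hAdm : Adm d p Q)
    (hK : Kfun d p Q = 0) (hN2 : N2fun d p Q = N2val d p) :
    ∀ ε : ℝ, 0 < ε → ∃ splus sminus : ℝ,
      (fun x => (splus : ℂ) * Q x) ∈ PWplus d p ∧
      (fun x => (sminus : ℂ) * Q x) ∈ PWminus d p ∧
      h1norm d (fun x => Q x - (splus : ℂ) * Q x) ≤ ε ∧
      h1norm d (fun x => Q x - (sminus : ℂ) * Q x) ≤ ε := by
  intro ε hε
  have hD : 4 < (d : ℝ) * (p - 1) := by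
    have hd' : (0 : ℝ) < d := by exact_mod_cast hd
    rw [← div_lt_iff₀' hd']
    linarith
  have hQ : 0 < h1norm d Q :=
    Real.sqrt_pos.2 (add_pos hAdm.ppow_two_pos (gradSq_pos_of_Kfun_eq_zero hD hAdm hK))
  set δ := min (1 / 2) (ε / h1norm d Q)
  have hδ : 0 < δ := lt_min one_half_pos (div_pos hε hQ)
  have hδε : δ * h1norm d Q ≤ ε := (le_div_iff₀ hQ).1 (min_le_right _ _)
  refine ⟨1 - δ, 1 + δ,
    ofReal_mul_mem_PWplus hD hAdm hK hN2 (by linarith [min_le_left (1 / 2) (ε / h1norm d Q)])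
      (by linarith),
    ofReal_mul_mem_PWminus hD hAdm hK hN2 (by linarith), ?_, ?_⟩ <;>
  rw [h1norm_sub_ofReal_mul hAdm.1.2.1] <;>
  simpa [abs_of_pos hδ] using hδε

/-- instability of the ground state: let `Q = Q_ω` be the ground state of
`ΔQ − ωQ + |Q|^{p−1}Q = 0` (so `𝒦(Q) = 0` and `𝒩₂(Q) = N₂`).  Then `Q` lies in the
`H¹`-closure of both `PW₊` and `PW₋`: for every `ε > 0` there exist scalar multiples
`s₊ Q ∈ PW₊` and `s₋ Q ∈ PW₋` with `‖Q − s_± Q‖_{H¹} ≤ ε`. -/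
theorem ground_state_instability (d : ℕ) (p : ℝ) (hd : 1 ≤ d)
    (hp1 : 2 + 4 / (d : ℝ) < p + 1)
    (hp2 : 3 ≤ d → p + 1 < 2 * (d : ℝ) / ((d : ℝ) - 2))
    (ω : ℝ) (hω : 0 < ω)
    (Q : Euc d → ℂ) (hsm : ContDiff ℝ 2 Q) (hAdm : Adm d p Q)
    (hPDE : ∀ x, lap d Q x - (ω : ℂ) * Q x + ((‖Q x‖ ^ (p - 1) : ℝ) : ℂ) * Q x = 0)
    (hK : Kfun d p Q = 0) (hN2 : N2fun d p Q = N2val d p) :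
    ∀ ε : ℝ, 0 < ε → ∃ splus sminus : ℝ,
      (fun x => (splus : ℂ) * Q x) ∈ PWplus d p ∧
      (fun x => (sminus : ℂ) * Q x) ∈ PWminus d p ∧
      h1norm d (fun x => Q x - (splus : ℂ) * Q x) ≤ ε ∧
      h1norm d (fun x => Q x - (sminus : ℂ) * Q x) ≤ ε :=
  ground_state_instability_general d p hd hp1 Q hAdm hK hN2
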